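/- arXiv:1612.09108 — 5 statements merged into one kernel-verified Lean document; each statement's English description precedes it below -/
import Mathlib

section
/- Let μ be a K-valued measure on 𝓡. If (Aₙ)ₙ∈ℕ is a sequence of pairwise disjoint sets in 𝓡 whose union A = ⋃ₙ Aₙ also belongs to 𝓡, then the series Σₙ μ(Aₙ) converges to μ(A), i.e. the partial sums Σ_{k<n} μ(Aₖ) tend to μ(A) in K as n → ∞ (σ-additivity follows from the continuity axiom). -/
/-- A covering and separating ring of subsets of `X`. -/
structure IsSepSetRing {X : Type*} (R : Set (Set X)) : Prop where
  empty_mem : (∅ : Set X) ∈ R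
  union_mem : ∀ ⦃A B : Set X⦄, A ∈ R → B ∈ R → A ∪ B ∈ R
  diff_mem : ∀ ⦃A B : Set X⦄, A ∈ R → B ∈ R → A \ B ∈ R
  covering : ∀ x : X, ∃ A ∈ R, x ∈ A
  separating : ∀ a b : X, a ≠ b → ∃ A ∈ R, a ∈ A ∧ b ∉ A

/-- A `K`-valued measure on a ring of sets `R`. -/
structure IsNAMeasure {X : Type*} {K : Type*} [NontriviallyNormedField K]
    (R : Set (Set X)) (μ : Set X → K) : Prop where
  additive : ∀ ⦃A B : Set X⦄, A ∈ R → B ∈ R → Disjoint A B → μ (A ∪ B) = μ A + μ B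
  bounded : ∀ A ∈ R, BddAbove {r : ℝ | ∃ B ∈ R, B ⊆ A ∧ r = ‖μ B‖}
  continuity : ∀ R₀ ⊆ R, R₀.Nonempty → (∀ A ∈ R₀, ∀ B ∈ R₀, A ∩ B ∈ R₀) →
    ⋂₀ R₀ = ∅ → ∀ ε : ℝ, 0 < ε → ∃ A ∈ R₀, ‖μ A‖ < ε

/-- `‖A‖_μ`, the supremum of `‖μ B‖` over measurable `B ⊆ A`. -/
noncomputable def mSetNorm {X : Type*} {K : Type*} [NontriviallyNormedField K]
    (R : Set (Set X)) (μ : Set X → K) (A : Set X) : ℝ :=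
  sSup {r : ℝ | ∃ B ∈ R, B ⊆ A ∧ r = ‖μ B‖}

/-- The norm function `N_μ(x)`, the infimum of `‖A‖_μ` over measurable `A ∋ x`. -/
noncomputable def mNormFn {X : Type*} {K : Type*} [NontriviallyNormedField K]
    (R : Set (Set X)) (μ : Set X → K) (x : X) : ℝ :=
  sInf {r : ℝ | ∃ A ∈ R, x ∈ A ∧ r = mSetNorm R μ A}

/-- The extended (completed) ring `R_μ` of `μ`-approximable sets. -/
def extRing {X : Type*} {K : Type*} [NontriviallyNormedField K]
    (R : Set (Set X)) (μ : Set X → K) : Set (Set X) :=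
  {A : Set X | ∀ ε : ℝ, 0 < ε → ∃ B ∈ R, ∀ x ∈ (A ∪ B) \ (A ∩ B), mNormFn R μ x ≤ ε}

/-!
Remove the first `n` pieces from `A = ⋃ₙ Aₙ`: the remainders `Bₙ = A \ (A₀ ∪ … ∪ Aₙ)` lie in the
ring, decrease and have empty intersection, and by finite additivity `μ A` is the `n`-th partial
sum plus `μ Bₙ`. So it suffices that `μ Bₙ → 0`. If not, `‖μ Bₙ‖ ≥ ε` for infinitely many `n`;
these `Bₙ` form a chain, hence a family closed under intersections, with empty intersection,
on which `‖μ‖` stays `≥ ε`, against the continuity axiom.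
-/

open Filter Function Topology MeasureTheory

section AddContent

variable {α G : Type*} [AddCommGroup G] [TopologicalSpace G] [ContinuousSub G]
  {C : Set (Set α)}

theorem tendsto_sum_addContent_of_tendsto_zero (hC : IsSetRing C) (m : AddContent G C)
    (hm_tendsto : ∀ ⦃s : ℕ → Set α⦄, (∀ n, s n ∈ C) →
      Antitone s → (⋂ n, s n) = ∅ → Tendsto (fun n ↦ m (s n)) atTop (𝓝 0))
    {f : ℕ → Set α} (hf : ∀ i, f i ∈ C) (hUf : (⋃ i, f i) ∈ C)
    (h_disj : Pairwise (Disjoint on f)) :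
    Tendsto (fun n ↦ ∑ i ∈ Finset.range n, m (f i)) atTop (𝓝 (m (⋃ i, f i))) := by
  set s : ℕ → Set α := fun n ↦ (⋃ i, f i) \ Set.accumulate f n
  have hs n : s n ∈ C := hC.sdiff_mem hUf (hC.accumulate_mem hf n)
  have hs_anti : Antitone s := fun i j hij ↦
    Set.sdiff_subset_sdiff_right (Set.monotone_accumulate hij)
  have hs_empty : (⋂ n, s n) = ∅ := by
    simp_rw [s, Set.sdiff_eq]
    rw [Set.iInter_inter_distrib, Set.iInter_const, ← Set.compl_iUnion, Set.iUnion_accumulate,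
      Set.inter_compl_self]
  have h_split n : ∑ i ∈ Finset.range (n + 1), m (f i) = m (⋃ i, f i) - m (s n) := by
    rw [eq_sub_iff_add_eq, ← addContent_accumulate m hC h_disj hf, ← addContent_union hC
      (hC.accumulate_mem hf n) (hs n) Set.disjoint_sdiff_right,
      Set.union_sdiff_cancel (Set.accumulate_subset_iUnion n)]
  have h_sum : Tendsto (fun n ↦ m (⋃ i, f i) - m (s n)) atTop (𝓝 (m (⋃ i, f i))) := by
    simpa using tendsto_const_nhds.sub (hm_tendsto hs hs_anti hs_empty)
  refine (tendsto_add_atTop_iff_nat 1).mp ?_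
  simpa only [h_split] using h_sum

end AddContent

theorem IsSepSetRing.isSetRing {X : Type*} {R : Set (Set X)} (hR : IsSepSetRing R) :
    IsSetRing R :=
  ⟨hR.empty_mem, hR.union_mem, hR.diff_mem⟩

namespace IsNAMeasure

variable {X K : Type*} [NontriviallyNormedField K] {R : Set (Set X)} {μ : Set X → K}

theorem map_empty (hμ : IsNAMeasure R μ) (hR : ∅ ∈ R) : μ ∅ = 0 := by
  simpa using hμ.additive hR hR (Set.disjoint_empty ∅)

def toAddContent (hμ : IsNAMeasure R μ) (hR : IsSetRing R) : AddContent K R :=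
  hR.addContent_of_union μ (hμ.map_empty hR.empty_mem) fun hs ht hst ↦ hμ.additive hs ht hst

theorem tendsto_zero_of_antitone (hμ : IsNAMeasure R μ) {s : ℕ → Set X} (hs : ∀ n, s n ∈ R)
    (hs_anti : Antitone s) (hs_empty : (⋂ n, s n) = ∅) :
    Tendsto (fun n ↦ μ (s n)) atTop (𝓝 0) := by
  refine Metric.tendsto_atTop.mpr fun ε hε ↦ ?_
  by_contra! h_large
  simp only [dist_zero_right] at h_large
  set R₀ := s '' {n | ε ≤ ‖μ (s n)‖}
  have h_inter : ∀ A ∈ R₀, ∀ B ∈ R₀, A ∩ B ∈ R₀ := by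
    rintro _ ⟨i, hi, rfl⟩ _ ⟨j, hj, rfl⟩
    rcases le_total i j with hij | hji
    · exact ⟨j, hj, (Set.inter_eq_right.mpr (hs_anti hij)).symm⟩
    · exact ⟨i, hi, (Set.inter_eq_left.mpr (hs_anti hji)).symm⟩
  have h_sInter : ⋂₀ R₀ = ∅ := by
    refine Set.subset_empty_iff.mp (hs_empty ▸ Set.subset_iInter fun n x hx ↦ ?_)
    obtain ⟨m, hnm, hm⟩ := h_large n
    exact hs_anti hnm (hx _ ⟨m, hm, rfl⟩)
  obtain ⟨n₀, -, hn₀⟩ := h_large 0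
  obtain ⟨_, ⟨n, hn, rfl⟩, h_small⟩ :=
    hμ.continuity R₀ (Set.image_subset_iff.mpr fun n _ ↦ hs n) ⟨s n₀, n₀, hn₀, rfl⟩
      h_inter h_sInter ε hε
  exact h_small.not_ge hn

end IsNAMeasure

theorem stmt0_general {X K : Type*} [NontriviallyNormedField K]
    (R : Set (Set X)) (hR : IsSepSetRing R)
    (μ : Set X → K) (hμ : IsNAMeasure R μ)
    (A : ℕ → Set X) (hA : ∀ n, A n ∈ R)
    (hdisj : Pairwise (Function.onFun Disjoint A))
    (hU : (⋃ n, A n) ∈ R) :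
    Filter.Tendsto (fun n => ∑ k ∈ Finset.range n, μ (A k)) Filter.atTop
      (nhds (μ (⋃ n, A n))) :=
  tendsto_sum_addContent_of_tendsto_zero hR.isSetRing (hμ.toAddContent hR.isSetRing)
    (fun _ hs hs_anti hs_empty ↦ hμ.tendsto_zero_of_antitone hs hs_anti hs_empty) hA hU hdisj

theorem stmt0 {X K : Type*} [NontriviallyNormedField K] [CompleteSpace K]
    (hna : ∀ x y : K, ‖x + y‖ ≤ max ‖x‖ ‖y‖)
    (R : Set (Set X)) (hR : IsSepSetRing R)
    (μ : Set X → K) (hμ : IsNAMeasure R μ)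
    (A : ℕ → Set X) (hA : ∀ n, A n ∈ R)
    (hdisj : Pairwise (Function.onFun Disjoint A))
    (hU : (⋃ n, A n) ∈ R) :
    Filter.Tendsto (fun n => ∑ k ∈ Finset.range n, μ (A k)) Filter.atTop
      (nhds (μ (⋃ n, A n))) :=
  stmt0_general R hR μ hμ A hA hdisj hU
end

section
/- Let μ be a K-valued measure on 𝓡. Then the extended collection 𝓡_μ is again a ring of sets containing 𝓡: one has 𝓡 ⊆ 𝓡_μ, and for all A, B ∈ 𝓡_μ both A ∪ B ∈ 𝓡_μ and A \ B ∈ 𝓡_μ. -/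
/-!
Membership in `R_μ` only asks that `A Δ B` lie in the set `{x | N_μ(x) ≤ ε}` for some
`B ∈ R`. Since `(A ∪ B) Δ (A' ∪ B')` and `(A \ B) Δ (A' \ B')` are both contained in
`(A Δ A') ∪ (B Δ B')`, approximating `A` by `A'` and `B` by `B'` approximates `A ∪ B` by `A' ∪ B'`
and `A \ B` by `A' \ B'`, and these lie in `R` because `R` is a ring.
-/

open scoped symmDiff

namespace Set

variable {X : Type*}

theorem diff_symmDiff_diff_subset {s t u v : Set X} : (s \ t) ∆ (u \ v) ⊆ s ∆ u ∪ t ∆ v := by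
  grind

end Set

section ExtRing

variable {X K : Type*} [NontriviallyNormedField K] {R : Set (Set X)} {μ : Set X → K}

theorem mem_extRing_iff {A : Set X} :
    A ∈ extRing R μ ↔ ∀ ε : ℝ, 0 < ε → ∃ B ∈ R, ∀ x ∈ A ∆ B, mNormFn R μ x ≤ ε := by
  simp only [symmDiff_eq_sup_sdiff_inf]
  rfl

theorem subset_extRing : R ⊆ extRing R μ := fun A hA =>
  mem_extRing_iff.2 fun _ _ => ⟨A, hA, by simp⟩

theorem extRing_closed_of_symmDiff_subset (op : Set X → Set X → Set X)
    (hop_mem : ∀ ⦃A B⦄, A ∈ R → B ∈ R → op A B ∈ R)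
    (hop_symmDiff : ∀ A B A' B', op A B ∆ op A' B' ⊆ A ∆ A' ∪ B ∆ B') {A B : Set X}
    (hA : A ∈ extRing R μ) (hB : B ∈ extRing R μ) : op A B ∈ extRing R μ := by
  refine mem_extRing_iff.2 fun ε hε => ?_
  obtain ⟨A', hA', hAA'⟩ := mem_extRing_iff.1 hA ε hε
  obtain ⟨B', hB', hBB'⟩ := mem_extRing_iff.1 hB ε hε
  refine ⟨op A' B', hop_mem hA' hB', fun x hx => ?_⟩
  rcases hop_symmDiff A B A' B' hx with hx | hx
  exacts [hAA' x hx, hBB' x hx]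

end ExtRing

theorem stmt5_general {X K : Type*} [NontriviallyNormedField K]
    (R : Set (Set X)) (hR : IsSepSetRing R)
    (μ : Set X → K) :
    R ⊆ extRing R μ ∧
      (∀ A ∈ extRing R μ, ∀ B ∈ extRing R μ, A ∪ B ∈ extRing R μ) ∧
      (∀ A ∈ extRing R μ, ∀ B ∈ extRing R μ, A \ B ∈ extRing R μ) :=
  ⟨subset_extRing,
    fun _ hA _ hB => extRing_closed_of_symmDiff_subset _ hR.union_mem
      (fun _ _ _ _ => Set.union_symmDiff_union_subset) hA hB,
    fun _ hA _ hB => extRing_closed_of_symmDiff_subset _ hR.diff_mem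
      (fun _ _ _ _ => Set.diff_symmDiff_diff_subset) hA hB⟩

theorem stmt5 {X K : Type*} [NontriviallyNormedField K] [CompleteSpace K]
    (hna : ∀ x y : K, ‖x + y‖ ≤ max ‖x‖ ‖y‖)
    (R : Set (Set X)) (hR : IsSepSetRing R)
    (μ : Set X → K) (hμ : IsNAMeasure R μ) :
    R ⊆ extRing R μ ∧
      (∀ A ∈ extRing R μ, ∀ B ∈ extRing R μ, A ∪ B ∈ extRing R μ) ∧
      (∀ A ∈ extRing R μ, ∀ B ∈ extRing R μ, A \ B ∈ extRing R μ) :=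
  stmt5_general R hR μ
end

section
/- Countable saturation of the ultrapower over the hyperfilter (Proposition on shrinking families of internal sets): Let X be a set and let B : ℕ → ℕ → Set X be a countable family, where B n (as a sequence of sets modulo U) represents the n-th internal subset of the ultrapower of X. Suppose the family is shrinking in the internal sense: for all m, n ∈ ℕ there exists k ∈ ℕ with {i : B k i ⊆ B m i ∩ B n i} ∈ U; and suppose every member is internally nonempty: for every n, {i : B n i ≠ ∅} ∈ U. Then the internal intersection is nonempty: there exists x : ℕ → X such that for every n ∈ ℕ, {i : x i ∈ B n i} ∈ U. -/
/-!
Diagonal argument. Reduce to a sequence whose finite initial intersections `⋂ m ≤ n, C m i` are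
`U`-almost everywhere nonempty. In coordinate `i` pick a point of the deepest nonempty initial
intersection of depth at most `i`. Because `U` contains all cofinite sets, for each `n` the depth at
`i` is at least `n` for `U`-almost every `i`, so the chosen point lies in `C n i` for those `i`.
-/

open Filter Set

theorem exists_forall_eventually_mem_of_biInter_nonempty {X : Type*} [Nonempty X]
    {l : Filter ℕ} (hl : l ≤ cofinite) (C : ℕ → ℕ → Set X)
    (h : ∀ n, ∀ᶠ i in l, (⋂ m ≤ n, C m i).Nonempty) :
    ∃ x : ℕ → X, ∀ n, ∀ᶠ i in l, x i ∈ C n i := by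
  classical
  let depth (i : ℕ) : ℕ := Nat.findGreatest (fun n => (⋂ m ≤ n, C m i).Nonempty) i
  refine ⟨fun i => Classical.epsilon (· ∈ ⋂ m ≤ depth i, C m i), fun n => ?_⟩
  have h_ge : ∀ᶠ i in l, n ≤ i := hl (Nat.cofinite_eq_atTop ▸ eventually_ge_atTop n)
  filter_upwards [h n, h_ge] with i hn hni
  have hdepth : (⋂ m ≤ depth i, C m i).Nonempty :=
    Nat.findGreatest_spec (P := fun n => (⋂ m ≤ n, C m i).Nonempty) hni hn
  exact mem_iInter₂.1 (Classical.epsilon_spec hdepth) n (Nat.le_findGreatest hni hn)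

theorem exists_eventually_subset_biInter_of_shrinking {ι X : Type*} {l : Filter ι}
    (B : ℕ → ι → Set X) (hshrink : ∀ m n, ∃ k, ∀ᶠ i in l, B k i ⊆ B m i ∩ B n i) (n : ℕ) :
    ∃ k, ∀ᶠ i in l, B k i ⊆ ⋂ m ≤ n, B m i := by
  induction n with
  | zero => exact ⟨0, Eventually.of_forall fun i => by simp⟩
  | succ n ih =>
    obtain ⟨k, hk⟩ := ih
    obtain ⟨k', hk'⟩ := hshrink k (n + 1)
    refine ⟨k', ?_⟩
    filter_upwards [hk, hk'] with i hsub hsub'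
    refine subset_iInter₂ fun m hm => ?_
    rcases Nat.le_succ_iff.1 hm with hm | rfl
    · exact (hsub'.trans inter_subset_left).trans (hsub.trans (biInter_subset_of_mem hm))
    · exact hsub'.trans inter_subset_right

/-- Countable saturation for the ultrapower over the hyperfilter: a countable
internally-shrinking family of internally nonempty internal sets has a common
element in the ultrapower. -/
theorem stmt12 {X : Type*} (B : ℕ → ℕ → Set X)
    (hshrink : ∀ m n : ℕ, ∃ k : ℕ,
      {i : ℕ | B k i ⊆ B m i ∩ B n i} ∈ Filter.hyperfilter ℕ)
    (hne : ∀ n : ℕ, {i : ℕ | B n i ≠ ∅} ∈ Filter.hyperfilter ℕ) :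
    ∃ x : ℕ → X, ∀ n : ℕ, {i : ℕ | x i ∈ B n i} ∈ Filter.hyperfilter ℕ := by
  obtain ⟨i, hi⟩ := Eventually.exists (hne 0)
  have : Nonempty X := ⟨(nonempty_iff_ne_empty.2 hi).some⟩
  refine exists_forall_eventually_mem_of_biInter_nonempty hyperfilter_le_cofinite B fun n => ?_
  obtain ⟨k, hk⟩ := exists_eventually_subset_biInter_of_shrinking B hshrink n
  filter_upwards [hk, hne k] with i hsub hk_ne
  exact (nonempty_iff_ne_empty.2 hk_ne).mono hsub
end

section
/- Volkenborn-type limit for power functions (p-adic integral of xⁿ): let p be a prime and n ∈ ℕ. Then in the field ℚ_p of p-adic numbers, the sequence N ↦ (1/pᴺ) · Σ_{m=0}^{pᴺ−1} mⁿ converges as N → ∞ to the n-th Bernoulli number Bₙ (cast from ℚ into ℚ_p), where the Bernoulli numbers are taken with the convention B₁ = −1/2. -/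
/-!
Faulhaber's formula writes `Σ_{m<M} mⁿ` as a polynomial in `M` with zero constant term whose
linear coefficient is `Bₙ`. Dividing by `M` leaves a polynomial in `M` with constant term `Bₙ`,
and `pᴺ → 0` in `ℚ_p`.
-/

open Finset Filter Topology

section Faulhaber

variable {K : Type*} [Field K]

variable (K) in
noncomputable def faulhaberQuotient (n : ℕ) (x : K) : K :=
  ∑ i ∈ range (n + 1), ((bernoulli i * (n + 1).choose i / (n + 1) : ℚ) : K) * x ^ (n - i)

theorem faulhaberQuotient_zero (n : ℕ) : faulhaberQuotient K n 0 = (bernoulli n : K) := by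
  have hlast : (bernoulli n * (n + 1).choose n / (n + 1) : ℚ) = bernoulli n := by
    rw [Nat.choose_succ_self_right]
    push_cast
    field_simp
  rw [faulhaberQuotient, sum_range_succ, hlast, Nat.sub_self, pow_zero, mul_one,
    add_eq_right]
  refine sum_eq_zero fun i hi => ?_
  rw [zero_pow (Nat.sub_ne_zero_of_lt (mem_range.mp hi)), mul_zero]

theorem natCast_mul_faulhaberQuotient [CharZero K] (n M : ℕ) :
    (M : K) * faulhaberQuotient K n M = ∑ m ∈ range M, (m : K) ^ n := by
  have h := congrArg (Rat.cast : ℚ → K) (sum_range_pow M n)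
  push_cast at h
  rw [h, faulhaberQuotient, mul_sum]
  refine sum_congr rfl fun i hi => ?_
  rw [Nat.sub_add_comm (Nat.lt_succ_iff.mp (mem_range.mp hi))]
  push_cast
  ring

theorem inv_mul_sum_range_pow [CharZero K] {M : ℕ} (hM : M ≠ 0) (n : ℕ) :
    (M : K)⁻¹ * ∑ m ∈ range M, (m : K) ^ n = faulhaberQuotient K n M := by
  rw [← natCast_mul_faulhaberQuotient, inv_mul_cancel_left₀ (Nat.cast_ne_zero.mpr hM)]

variable [TopologicalSpace K] [IsTopologicalRing K]

theorem continuous_faulhaberQuotient (n : ℕ) : Continuous (faulhaberQuotient K n) := by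
  unfold faulhaberQuotient
  fun_prop

theorem tendsto_inv_mul_sum_range_pow [CharZero K] {ι : Type*} {l : Filter ι} {M : ι → ℕ}
    (hM₀ : ∀ i, M i ≠ 0) (hM : Tendsto (fun i => (M i : K)) l (𝓝 0)) (n : ℕ) :
    Tendsto (fun i => (M i : K)⁻¹ * ∑ m ∈ range (M i), (m : K) ^ n) l
      (𝓝 (bernoulli n : K)) := by
  simp_rw [inv_mul_sum_range_pow (hM₀ _), ← faulhaberQuotient_zero]
  exact (continuous_faulhaberQuotient n).continuousAt.tendsto.comp hM

end Faulhaber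

/-- Volkenborn-type limit: `(1/pᴺ) Σ_{m<pᴺ} mⁿ → Bₙ` in `ℚ_p`. -/
theorem stmt17 (p : ℕ) [Fact p.Prime] (n : ℕ) :
    Filter.Tendsto
      (fun N : ℕ =>
        ((p : ℚ_[p]) ^ N)⁻¹ * ∑ m ∈ Finset.range (p ^ N), (m : ℚ_[p]) ^ n)
      Filter.atTop (nhds ((bernoulli n : ℚ) : ℚ_[p])) := by
  have hp_pow : Tendsto (fun N : ℕ => ((p ^ N : ℕ) : ℚ_[p])) atTop (𝓝 0) := by
    simpa using tendsto_pow_atTop_nhds_zero_of_norm_lt_one (Padic.norm_p_lt_one (p := p))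
  simpa using tendsto_inv_mul_sum_range_pow
    (fun N => pow_ne_zero N (Fact.out : p.Prime).ne_zero) hp_pow n
end

section
/- Existence of the q-adic Haar integral on ℤ_p as a limit of Riemann sums: let p and q be distinct primes and let f : ℤ_p → ℚ_q be continuous (ℤ_p with its p-adic topology, ℚ_q with its q-adic topology). Then the sequence of Riemann sums n ↦ (1/pⁿ) · Σ_{m=0}^{pⁿ−1} f(m) converges in ℚ_q to some limit L as n → ∞, where 1/pⁿ denotes the inverse of (p : ℚ_q)ⁿ (which has q-adic norm 1) and m is taken as the element (m : ℤ_p). -/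
/-!
The points `j + pᵏ i` (`j < pᵏ`, `i < p`) enumerating `range (pᵏ⁺¹)` are `pᵏ`-close
to `j` in `ℤ_p`, so by uniform continuity of `f` the difference of consecutive Riemann sums is
`(pᵏ⁺¹)⁻¹` times a sum of small terms. Since `‖p‖ = 1` in `ℚ_q` and the norm is ultrametric, that
difference is itself small, and in a complete nonarchimedean field a sequence whose consecutive
differences tend to `0` converges.
-/

open Filter Topology Finset

theorem Finset.sum_range_mul_eq_sum_sum {M : Type*} [AddCommMonoid M] (g : ℕ → M) (a b : ℕ) :
    ∑ m ∈ range (a * b), g m = ∑ i ∈ range b, ∑ j ∈ range a, g (a * i + j) := by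
  induction b with
  | zero => simp
  | succ b ih => rw [Nat.mul_succ, sum_range_add, ih, sum_range_succ]

theorem Padic.norm_natCast_prime_eq_one {p q : ℕ} [Fact p.Prime] [Fact q.Prime] (hpq : p ≠ q) :
    ‖(p : ℚ_[q])‖ = 1 :=
  norm_natCast_eq_one_iff.mpr ((Nat.coprime_primes Fact.out Fact.out).mpr hpq.symm)

theorem PadicInt.norm_natCast_mul_add_sub_le {p : ℕ} [Fact p.Prime] (k i j : ℕ) :
    ‖((p ^ k * i + j : ℕ) : ℤ_[p]) - j‖ ≤ ‖(p : ℤ_[p]) ^ k‖ := by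
  have hsub : ((p ^ k * i + j : ℕ) : ℤ_[p]) - j = (p : ℤ_[p]) ^ k * i := by push_cast; ring
  rw [hsub, norm_mul]
  exact mul_le_of_le_one_right (norm_nonneg _) (norm_le_one _)

section RiemannSum

variable {K : Type*} (p : ℕ) [Fact p.Prime]

noncomputable def padicRiemannSum [Field K] (f : ℤ_[p] → K) (n : ℕ) : K :=
  ((p : K) ^ n)⁻¹ * ∑ m ∈ range (p ^ n), f m

variable {p}

theorem padicRiemannSum_succ_sub [Field K] (hp : (p : K) ≠ 0) (f : ℤ_[p] → K) (k : ℕ) :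
    padicRiemannSum p f (k + 1) - padicRiemannSum p f k =
      ((p : K) ^ (k + 1))⁻¹ *
        ∑ i ∈ range p, ∑ j ∈ range (p ^ k), (f ((p ^ k * i + j : ℕ) : ℤ_[p]) - f j) := by
  have hprev : padicRiemannSum p f k =
      ((p : K) ^ (k + 1))⁻¹ * ∑ _i ∈ range p, ∑ j ∈ range (p ^ k), f j := by
    rw [padicRiemannSum, sum_const, card_range, nsmul_eq_mul]
    field_simp
    ring
  rw [hprev, padicRiemannSum, ← mul_sub, pow_succ p k, sum_range_mul_eq_sum_sum]
  simp only [← sum_sub_distrib]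

variable [NormedField K] [IsUltrametricDist K]

theorem norm_padicRiemannSum_succ_sub_le (hp : ‖(p : K)‖ = 1) {f : ℤ_[p] → K} {k : ℕ} {ε : ℝ}
    (hε : 0 ≤ ε) (hf : ∀ x y, dist x y ≤ ‖(p : ℤ_[p]) ^ k‖ → dist (f x) (f y) ≤ ε) :
    ‖padicRiemannSum p f (k + 1) - padicRiemannSum p f k‖ ≤ ε := by
  rw [padicRiemannSum_succ_sub (norm_ne_zero_iff.mp (hp.trans_ne one_ne_zero)), norm_mul,
    norm_inv, norm_pow, hp, one_pow, inv_one, one_mul]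
  refine IsUltrametricDist.norm_sum_le_of_forall_le_of_nonneg hε fun i _ => ?_
  refine IsUltrametricDist.norm_sum_le_of_forall_le_of_nonneg hε fun j _ => ?_
  rw [← dist_eq_norm]
  exact hf _ _ ((dist_eq_norm _ _).trans_le (PadicInt.norm_natCast_mul_add_sub_le k i j))

theorem tendsto_padicRiemannSum_succ_sub (hp : ‖(p : K)‖ = 1) {f : ℤ_[p] → K}
    (hf : UniformContinuous f) :
    Tendsto (fun k ↦ padicRiemannSum p f (k + 1) - padicRiemannSum p f k) atTop (𝓝 0) := by
  refine NormedAddGroup.tendsto_nhds_zero.mpr fun ε hε ↦ ?_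
  obtain ⟨δ, hδ, hfδ⟩ := Metric.uniformContinuous_iff.mp hf (ε / 2) (half_pos hε)
  have hsmall : ∀ᶠ k in atTop, ‖(p : ℤ_[p]) ^ k‖ < δ :=
    (tendsto_pow_atTop_nhds_zero_of_norm_lt_one Padic.norm_p_lt_one).norm.eventually
      (gt_mem_nhds (by simpa using hδ))
  filter_upwards [hsmall] with k hk
  refine (norm_padicRiemannSum_succ_sub_le hp (half_pos hε).le fun x y hxy ↦ ?_).trans_lt
    (half_lt_self hε)
  exact (hfδ (hxy.trans_lt hk)).le

theorem exists_tendsto_padicRiemannSum [CompleteSpace K] (hp : ‖(p : K)‖ = 1) {f : ℤ_[p] → K}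
    (hf : Continuous f) : ∃ L : K, Tendsto (padicRiemannSum p f) atTop (𝓝 L) :=
  cauchySeq_tendsto_of_complete <| NonarchimedeanAddGroup.cauchySeq_of_tendsto_sub_nhds_zero <|
    tendsto_padicRiemannSum_succ_sub hp (CompactSpace.uniformContinuous_of_continuous hf)

end RiemannSum

/-- Existence of the `q`-adic Haar integral on `ℤ_p` as a limit of Riemann sums:
for distinct primes `p ≠ q` and continuous `f : ℤ_p → ℚ_q`, the Riemann sums
`(1/pⁿ) Σ_{m<pⁿ} f(m)` converge in `ℚ_q`. -/
theorem stmt19 (p q : ℕ) [Fact p.Prime] [Fact q.Prime] (hpq : p ≠ q)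
    (f : ℤ_[p] → ℚ_[q]) (hf : Continuous f) :
    ∃ L : ℚ_[q], Filter.Tendsto
      (fun n : ℕ =>
        ((p : ℚ_[q]) ^ n)⁻¹ * ∑ m ∈ Finset.range (p ^ n), f (m : ℤ_[p]))
      Filter.atTop (nhds L) :=
  exists_tendsto_padicRiemannSum (Padic.norm_natCast_prime_eq_one hpq) hf
end
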